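/- arXiv:1301.5533 — 2 statements merged into one kernel-verified Lean document; each statement's English description precedes it below -/
import Mathlib

section
/- A finitely generated metabelian group G is polycyclic if and only if every subgroup of G generated by two elements is polycyclic. -/
/-- A group is polycyclic iff it is solvable and all its subgroups are finitely generated. -/
def IsPolycyclic (G : Type*) [Group G] : Prop :=
  IsSolvable G ∧ ∀ H : Subgroup G, H.FG

/-- A group is metabelian if its derived subgroup is abelian. -/
def IsMetabelian (G : Type*) [Group G] : Prop :=
  ∀ x y : G, x ∈ commutator G → y ∈ commutator G → x * y = y * x

/-- A group is residually nilpotent if the intersection of its lower central series is trivial.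
(With Mathlib indexing, `γ_{n+1}(G) = lowerCentralSeries G n`.) -/
def IsResiduallyNilpotent (G : Type*) [Group G] : Prop :=
  (⨅ n : ℕ, (⊤ : Subgroup G).lowerCentralSeries n) = ⊥

/-- The natural projection `G/γ_{n+2}(G) → G/γ_{n+1}(G)` (with Mathlib indexing,
`γ_{k+1}(G) = lowerCentralSeries G k`). -/
def nilpotentQuotientMap (G : Type*) [Group G] (n : ℕ) :
    G ⧸ (⊤ : Subgroup G).lowerCentralSeries (n + 2) →* G ⧸ (⊤ : Subgroup G).lowerCentralSeries (n + 1) :=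
  QuotientGroup.map _ _ (MonoidHom.id G)
    (by simpa using (⊤ : Subgroup G).lowerCentralSeries_antitone (Nat.le_succ (n + 1)))

/-- The pronilpotent completion of `G`: the subgroup of `∏_{n ≥ 1} G/γ_{n+1}(G)` consisting of
coherent sequences. -/
def pronilpotentCompletion (G : Type*) [Group G] :
    Subgroup (Π n : ℕ, G ⧸ (⊤ : Subgroup G).lowerCentralSeries (n + 1)) where
  carrier := { f | ∀ n : ℕ, nilpotentQuotientMap G n (f (n + 1)) = f n }
  one_mem' := by intro n; exact map_one _
  mul_mem' := by
    intro a b ha hb n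
    simp only [Pi.mul_apply, map_mul, ha n, hb n]
  inv_mem' := by
    intro a ha n
    simp only [Pi.inv_apply, map_inv, ha n]

/-- The homomorphism `G/γ_{n+1}(G) → H/γ_{n+1}(H)` induced by `φ : G →* H` on the lower
central series quotients. -/
def lcsQuotientMap {G H : Type*} [Group G] [Group H] (φ : G →* H) (n : ℕ) :
    G ⧸ (⊤ : Subgroup G).lowerCentralSeries n →* H ⧸ (⊤ : Subgroup H).lowerCentralSeries n :=
  QuotientGroup.map _ _ φ
    (Subgroup.map_le_iff_le_comap.mp (Subgroup.lowerCentralSeries.map φ n))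

open scoped commutatorElement

section Aux

open Subgroup

variable {G : Type*} [Group G]

private lemma fg_equiv' {M N : Type*} [Group M] [Group N] (e : M ≃* N) (h : Group.FG M) :
    Group.FG N := by
  haveI := h
  exact Group.fg_of_surjective (f := e.toMonoidHom) e.surjective

private lemma fg_of_le {H K : Subgroup G} (hK : K ≤ H) (h : (K.subgroupOf H).FG) : K.FG :=
  (Group.fg_iff_subgroup_fg K).mp
    (fg_equiv' (Subgroup.subgroupOfEquivOfLe hK) ((Group.fg_iff_subgroup_fg _).mpr h))

private lemma fg_sup {K K' : Subgroup G} (h : K.FG) (h' : K'.FG) : (K ⊔ K').FG := by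
  classical
  obtain ⟨T, hT⟩ := h
  obtain ⟨T', hT'⟩ := h'
  exact ⟨T ∪ T', by rw [Finset.coe_union, Subgroup.closure_union, hT, hT']⟩

private lemma fg_closure_biUnion (T : Finset G) (f : G → Set G)
    (h : ∀ t ∈ T, (Subgroup.closure (f t)).FG) :
    (Subgroup.closure (⋃ t ∈ (T : Set G), f t)).FG := by
  classical
  induction T using Finset.induction_on with
  | empty => exact ⟨∅, by simp⟩
  | @insert a s ha ih =>
    rw [Finset.coe_insert, Set.biUnion_insert, Subgroup.closure_union]
    exact fg_sup (h a (Finset.mem_insert_self a s))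
      (ih fun t ht => h t (Finset.mem_insert_of_mem ht))

private lemma comm_group_noetherian {M : Type*} [CommGroup M] (hfg : Group.FG M)
    (K : Subgroup M) : K.FG := by
  rw [Subgroup.fg_iff_add_fg]
  haveI : AddGroup.FG (Additive M) := GroupFG.iff_add_fg.mp hfg
  haveI : Module.Finite ℤ (Additive M) := Module.Finite.iff_addGroup_fg.mpr ‹_›
  have hnoeth : (AddSubgroup.toIntSubmodule K.toAddSubgroup).FG :=
    IsNoetherian.noetherian _
  rwa [Submodule.fg_iff_addSubgroup_fg, AddSubgroup.toIntSubmodule_toAddSubgroup] at hnoeth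

private lemma fg_of_map_of_inf_ker {Q : Type*} [Group Q] (f : G →* Q) (H : Subgroup G)
    (h1 : (H.map f).FG) (h2 : (H ⊓ f.ker).FG) : H.FG := by
  classical
  obtain ⟨T1, hT1⟩ := h1
  obtain ⟨T2, hT2⟩ := h2
  have hpre : ∀ t ∈ T1, ∃ g : G, g ∈ H ∧ f g = t := by
    intro t ht
    have : t ∈ H.map f := hT1 ▸ Subgroup.subset_closure ht
    obtain ⟨g, hg, rfl⟩ := this
    exact ⟨g, hg, rfl⟩
  choose! pre hpre1 hpre2 using hpre
  refine ⟨T1.image pre ∪ T2, le_antisymm ?_ ?_⟩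
  · rw [Subgroup.closure_le]
    rintro x hx
    simp only [Finset.coe_union, Set.mem_union, Finset.coe_image, Set.mem_image,
      Finset.mem_coe] at hx
    rcases hx with ⟨t, ht, rfl⟩ | hx
    · exact hpre1 t ht
    · exact (show x ∈ H ⊓ f.ker from hT2 ▸ Subgroup.subset_closure hx).1
  · intro x hx
    have hUH : Subgroup.closure ((T1.image pre : Finset G) : Set G) ≤ H := by
      rw [Subgroup.closure_le]
      rintro y hy
      simp only [Finset.coe_image, Set.mem_image, Finset.mem_coe] at hy
      obtain ⟨t, ht, rfl⟩ := hy
      exact hpre1 t ht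
    have hfx : f x ∈ (Subgroup.closure ((T1.image pre : Finset G) : Set G)).map f := by
      rw [MonoidHom.map_closure]
      have himg : f '' ((T1.image pre : Finset G) : Set G) = (T1 : Set Q) := by
        ext y
        constructor
        · rintro ⟨u, hu, rfl⟩
          simp only [Finset.coe_image, Set.mem_image, Finset.mem_coe] at hu
          obtain ⟨t, ht, rfl⟩ := hu
          rw [hpre2 t ht]
          exact ht
        · intro hy
          exact ⟨pre y, by
            simp only [Finset.coe_image, Set.mem_image, Finset.mem_coe]
            exact ⟨y, hy, rfl⟩, hpre2 y hy⟩
      rw [himg, hT1]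
      exact ⟨x, hx, rfl⟩
    obtain ⟨g, hg, hfg⟩ := hfx
    have hk : x * g⁻¹ ∈ H ⊓ f.ker := by
      rw [Subgroup.mem_inf]
      refine ⟨H.mul_mem hx (H.inv_mem (hUH hg)), ?_⟩
      rw [MonoidHom.mem_ker, map_mul, map_inv, hfg]
      simp
    have hmem1 : x * g⁻¹ ∈ Subgroup.closure ((T1.image pre ∪ T2 : Finset G) : Set G) := by
      apply Subgroup.closure_mono (show ((T2 : Finset G) : Set G) ⊆ _ by
        rw [Finset.coe_union]; exact Set.subset_union_right)
      rw [hT2]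
      exact hk
    have hmem2 : g ∈ Subgroup.closure ((T1.image pre ∪ T2 : Finset G) : Set G) := by
      apply Subgroup.closure_mono (show ((T1.image pre : Finset G) : Set G) ⊆ _ by
        rw [Finset.coe_union]; exact Set.subset_union_left)
      exact hg
    simpa using mul_mem hmem1 hmem2

end Aux

section Conj

variable {G : Type*} [Group G]

private def conjSet (g c : G) : Set G := Set.range fun n : ℤ => g ^ n * c * g ^ (-n)

private def iterSet : List G → G → Set G
  | [], c => {c}
  | g :: L, c => ⋃ n : ℤ, (fun x => g ^ n * x * g ^ (-n)) '' iterSet L c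

private lemma self_mem_iterSet (L : List G) (c : G) : c ∈ iterSet L c := by
  induction L with
  | nil => exact rfl
  | cons g L ih =>
    rw [iterSet]
    exact Set.mem_iUnion.mpr ⟨0, ⟨c, ih, by simp⟩⟩

private lemma iterSet_subset_commutator {L : List G} {c : G} (hc : c ∈ commutator G) :
    ∀ x ∈ iterSet L c, x ∈ commutator G := by
  induction L with
  | nil => intro x hx; rw [Set.mem_singleton_iff.mp hx]; exact hc
  | cons g L ih =>
    intro x hx
    rw [iterSet] at hx
    obtain ⟨n, y, hy, rfl⟩ := Set.mem_iUnion.mp hx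
    have := (Subgroup.commutator_normal (⊤ : Subgroup G) ⊤).conj_mem y (ih y hy) (g ^ n)
    rw [commutator_def]
    simpa [zpow_neg] using this

/-- conjugation pushes closures forward. -/
private lemma conj_mem_closure_of_forall (g : G) (n : ℤ) {s t : Set G}
    (hmap : ∀ x ∈ s, g ^ n * x * g ^ (-n) ∈ Subgroup.closure t) {w : G}
    (hw : w ∈ Subgroup.closure s) : g ^ n * w * g ^ (-n) ∈ Subgroup.closure t := by
  have h1 : MulAut.conj (g ^ n) w ∈
      (Subgroup.closure s).map (MulAut.conj (g ^ n)).toMonoidHom :=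
    Subgroup.mem_map_of_mem _ hw
  rw [MonoidHom.map_closure] at h1
  have hle : Subgroup.closure ((MulAut.conj (g ^ n)).toMonoidHom '' s)
      ≤ Subgroup.closure t := by
    rw [Subgroup.closure_le]
    rintro _ ⟨x, hx, rfl⟩
    show MulAut.conj (g ^ n) x ∈ Subgroup.closure t
    rw [MulAut.conj_apply, ← zpow_neg]
    exact hmap x hx
  have h2 := hle h1
  rwa [show MulAut.conj (g ^ n) w = g ^ n * w * g ^ (-n) by
    rw [MulAut.conj_apply, zpow_neg]] at h2

private lemma conj_eq_conj (hMeta : IsMetabelian G) {y : G} (hy : y ∈ commutator G)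
    {u v : G} (huv : v⁻¹ * u ∈ commutator G) : u * y * u⁻¹ = v * y * v⁻¹ := by
  have hfix : (v⁻¹ * u) * y * (v⁻¹ * u)⁻¹ = y := by rw [hMeta _ y huv hy]; group
  have hexp : u * y * u⁻¹ = v * ((v⁻¹ * u) * y * (v⁻¹ * u)⁻¹) * v⁻¹ := by group
  rw [hexp, hfix]

private lemma conj_mem_closure_iterSet (hMeta : IsMetabelian G) {c : G}
    (hc : c ∈ commutator G) :
    ∀ (L : List G), ∀ g ∈ L, ∀ (m : ℤ), ∀ x ∈ iterSet L c,
      g ^ m * x * g ^ (-m) ∈ Subgroup.closure (iterSet L c) := by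
  intro L
  induction L with
  | nil => intro g hg; exact absurd hg List.not_mem_nil
  | cons g' L ih =>
    intro g hg m x hx
    rw [iterSet] at hx
    obtain ⟨n, y, hy, rfl⟩ := Set.mem_iUnion.mp hx
    rcases List.mem_cons.mp hg with rfl | hgL
    · apply Subgroup.subset_closure
      rw [iterSet]
      refine Set.mem_iUnion.mpr ⟨m + n, ⟨y, hy, ?_⟩⟩
      show g ^ (m + n) * y * g ^ (-(m + n)) = g ^ m * (g ^ n * y * g ^ (-n)) * g ^ (-m)
      group
    · have hyA : y ∈ commutator G := iterSet_subset_commutator hc y hy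
      have key : g ^ m * (g' ^ n * y * g' ^ (-n)) * g ^ (-m)
          = g' ^ n * (g ^ m * y * g ^ (-m)) * g' ^ (-n) := by
        have h1 : g ^ m * (g' ^ n * y * g' ^ (-n)) * g ^ (-m)
            = (g ^ m * g' ^ n) * y * (g ^ m * g' ^ n)⁻¹ := by
          rw [zpow_neg, zpow_neg, mul_inv_rev]; group
        have h2 : g' ^ n * (g ^ m * y * g ^ (-m)) * g' ^ (-n)
            = (g' ^ n * g ^ m) * y * (g' ^ n * g ^ m)⁻¹ := by
          rw [zpow_neg, zpow_neg, mul_inv_rev]; group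
        rw [h1, h2]
        apply conj_eq_conj hMeta hyA
        have hcomm : (g' ^ n * g ^ m)⁻¹ * (g ^ m * g' ^ n) = ⁅g ^ (-m), g' ^ (-n)⁆ := by
          rw [commutatorElement_def, zpow_neg, zpow_neg, inv_inv, inv_inv, mul_inv_rev]
          group
        rw [hcomm, commutator_def]
        exact Subgroup.commutator_mem_commutator (Subgroup.mem_top _) (Subgroup.mem_top _)
      rw [key]
      refine conj_mem_closure_of_forall g' n (s := iterSet L c) ?_ (ih g hgL m y hy)
      intro z hz
      apply Subgroup.subset_closure
      rw [iterSet]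
      exact Set.mem_iUnion.mpr ⟨n, ⟨z, hz, rfl⟩⟩

private lemma conjSet_fg
    (hpoly : ∀ a b : G, IsPolycyclic ↥(Subgroup.closure ({a, b} : Set G)))
    (g t : G) : (Subgroup.closure (conjSet g t)).FG := by
  set H := Subgroup.closure ({t, g} : Set G) with hH
  have hsub : Subgroup.closure (conjSet g t) ≤ H := by
    rw [Subgroup.closure_le]
    rintro x ⟨n, rfl⟩
    have ht : t ∈ H := Subgroup.subset_closure (Set.mem_insert _ _)
    have hg : g ∈ H := Subgroup.subset_closure (Set.mem_insert_of_mem _ rfl)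
    exact mul_mem (mul_mem (zpow_mem hg n) ht) (zpow_mem hg (-n))
  exact fg_of_le hsub ((hpoly t g).2 _)

private lemma closure_iterSet_fg
    (hpoly : ∀ a b : G, IsPolycyclic ↥(Subgroup.closure ({a, b} : Set G)))
    (L : List G) (c : G) : (Subgroup.closure (iterSet L c)).FG := by
  induction L with
  | nil => exact ⟨{c}, by rw [iterSet]; simp⟩
  | cons g L ih =>
    obtain ⟨T, hT⟩ := ih
    have key : Subgroup.closure (iterSet (g :: L) c)
        = Subgroup.closure (⋃ t ∈ (T : Set G), conjSet g t) := by
      apply le_antisymm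
      · rw [Subgroup.closure_le]
        rintro x hx
        rw [iterSet] at hx
        obtain ⟨n, y, hy, rfl⟩ := Set.mem_iUnion.mp hx
        have hy' : y ∈ Subgroup.closure (T : Set G) := by
          rw [hT]; exact Subgroup.subset_closure hy
        refine conj_mem_closure_of_forall g n ?_ hy'
        intro z hz
        exact Subgroup.subset_closure (Set.mem_biUnion hz ⟨n, rfl⟩)
      · rw [Subgroup.closure_le]
        rintro x hx
        obtain ⟨t, ht, hx⟩ := Set.mem_iUnion₂.mp hx
        obtain ⟨n, rfl⟩ := hx
        have ht' : t ∈ Subgroup.closure (iterSet L c) := by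
          rw [← hT]; exact Subgroup.subset_closure ht
        refine conj_mem_closure_of_forall g n ?_ ht'
        intro z hz
        apply Subgroup.subset_closure
        rw [iterSet]
        exact Set.mem_iUnion.mpr ⟨n, ⟨z, hz, rfl⟩⟩
    rw [key]
    exact fg_closure_biUnion T (conjSet g) fun t _ => conjSet_fg hpoly g t

end Conj

/-- A finitely generated metabelian group is polycyclic if and only if every
subgroup generated by two elements is polycyclic. -/
theorem stmt_0 {G : Type*} [Group G] (hFG : Group.FG G) (hMeta : IsMetabelian G) :
    IsPolycyclic G ↔ ∀ a b : G, IsPolycyclic ↥(Subgroup.closure ({a, b} : Set G)) := by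
  constructor
  · rintro ⟨hsolv, hfg⟩ a b
    haveI : Group.IsSolvable G := hsolv
    set H := Subgroup.closure ({a, b} : Set G) with hH
    refine ⟨(inferInstance : Group.IsSolvable _), fun K => ?_⟩
    have h1 : (K.map H.subtype).FG := hfg _
    have hle : K.map H.subtype ≤ H := by
      rintro x ⟨y, hy, rfl⟩
      exact y.2
    have h2 : K = (K.map H.subtype).subgroupOf H :=
      (Subgroup.comap_map_eq_self_of_injective H.subtype_injective K).symm
    rw [h2, ← Group.fg_iff_subgroup_fg]
    exact fg_equiv' (Subgroup.subgroupOfEquivOfLe hle).symm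
      ((Group.fg_iff_subgroup_fg _).mpr h1)
  · intro hpoly
    obtain ⟨S, hS⟩ := Group.fg_def.mp hFG
    classical
    set L := S.toList with hL
    set C : Finset G := (S ×ˢ S).image fun p => ⁅p.1, p.2⁆ with hC
    set N := Subgroup.closure (⋃ c ∈ (C : Set G), iterSet L c) with hN
    have hCcomm : ∀ c ∈ C, c ∈ commutator G := by
      intro c hc
      rw [hC, Finset.mem_image] at hc
      obtain ⟨p, _, rfl⟩ := hc
      rw [commutator_def]
      exact Subgroup.commutator_mem_commutator (Subgroup.mem_top _) (Subgroup.mem_top _)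
    have hNle : N ≤ commutator G := by
      rw [hN, Subgroup.closure_le]
      rintro x hx
      obtain ⟨c, hc, hx⟩ := Set.mem_iUnion₂.mp hx
      exact iterSet_subset_commutator (hCcomm c hc) x hx
    have hNfg : N.FG := by
      rw [hN]
      exact fg_closure_biUnion C (iterSet L) fun c _ => closure_iterSet_fg hpoly L c
    have hconjN : ∀ g ∈ L, ∀ (m : ℤ), ∀ x ∈ N, g ^ m * x * g ^ (-m) ∈ N := by
      intro g hg m x hx
      rw [hN] at hx ⊢
      refine conj_mem_closure_of_forall g m ?_ hx
      intro y hy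
      obtain ⟨c, hc, hy⟩ := Set.mem_iUnion₂.mp hy
      refine Subgroup.closure_mono ?_
        (conj_mem_closure_iterSet hMeta (hCcomm c hc) L g hg m y hy)
      exact Set.subset_iUnion₂ (s := fun c _ => iterSet L c) c hc
    have hNnormal : N.Normal := by
      rw [← Subgroup.normalizer_eq_top_iff, eq_top_iff, ← hS, Subgroup.closure_le]
      intro s hs
      have hsL : s ∈ L := by rw [hL]; exact Finset.mem_toList.mpr (Finset.mem_coe.mp hs)
      rw [SetLike.mem_coe, Subgroup.mem_normalizer_iff]
      intro x
      constructor
      · intro hx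
        have h' := hconjN s hsL 1 x hx
        have heq : s ^ (1 : ℤ) * x * s ^ (-(1 : ℤ)) = s * x * s⁻¹ := by group
        rwa [heq] at h'
      · intro hx
        have h' := hconjN s hsL (-1) _ hx
        have heq : s ^ (-1 : ℤ) * (s * x * s⁻¹) * s ^ (-(-1 : ℤ)) = x := by group
        rwa [heq] at h'
    haveI := hNnormal
    have htop : ∀ u : G ⧸ N, u ∈ Subgroup.closure ((QuotientGroup.mk' N) '' (S : Set G)) := by
      intro u
      have hc : Subgroup.closure ((QuotientGroup.mk' N) '' (S : Set G)) = ⊤ := by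
        rw [← MonoidHom.map_closure, hS]
        exact Subgroup.map_top_of_surjective _ (QuotientGroup.mk'_surjective N)
      rw [hc]; trivial
    have hST : ∀ s ∈ S, ∀ t ∈ S, ⁅s, t⁆ ∈ N := by
      intro s hs t ht
      rw [hN]
      apply Subgroup.subset_closure
      refine Set.mem_biUnion ?_ (self_mem_iterSet L ⁅s, t⁆)
      rw [hC]
      exact Finset.mem_coe.mpr
        (Finset.mem_image.mpr ⟨(s, t), Finset.mem_product.mpr ⟨hs, ht⟩, rfl⟩)
    have hcommQ : ∀ u v : G ⧸ N, u * v = v * u := by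
      intro u v
      refine Subgroup.closure_induction₂ (p := fun x y _ _ => x * y = y * x)
        ?_ ?_ ?_ ?_ ?_ ?_ ?_ (htop u) (htop v)
      · rintro _ _ ⟨s, hs, rfl⟩ ⟨t, ht, rfl⟩
        have h1 : (QuotientGroup.mk' N) ⁅s, t⁆ = 1 :=
          (QuotientGroup.eq_one_iff _).mpr (hST s hs t ht)
        rw [map_commutatorElement] at h1
        exact commutatorElement_eq_one_iff_mul_comm.mp h1
      · intro x _; rw [one_mul, mul_one]
      · intro x _; rw [one_mul, mul_one]
      · intro x y z _ _ _ h1 h2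
        rw [mul_assoc, h2, ← mul_assoc, h1, mul_assoc]
      · intro y z x _ _ _ h1 h2
        rw [← mul_assoc, h1, mul_assoc, h2, ← mul_assoc]
      · intro x y _ _ h
        exact Commute.inv_left h
      · intro x y _ _ h
        exact Commute.inv_right h
    have hcommN : commutator G ≤ N := by
      rw [commutator_def, Subgroup.commutator_le]
      intro x _ y _
      have h1 : (QuotientGroup.mk' N) ⁅x, y⁆ = 1 := by
        rw [map_commutatorElement]
        exact commutatorElement_eq_one_iff_mul_comm.mpr (hcommQ _ _)
      exact (QuotientGroup.eq_one_iff _).mp h1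
    have hcfg : (commutator G).FG := by
      rw [← le_antisymm hNle hcommN]
      exact hNfg
    constructor
    · rw [show IsSolvable G ↔ Group.IsSolvable G from Iff.rfl, isSolvable_def]
      refine ⟨2, ?_⟩
      have h1 : derivedSeries G 2 = ⁅commutator G, commutator G⁆ := by
        rw [show (2 : ℕ) = 1 + 1 from rfl, derivedSeries_succ, derivedSeries_one]
      rw [h1, eq_bot_iff, Subgroup.commutator_le]
      intro x hx y hy
      rw [Subgroup.mem_bot, commutatorElement_eq_one_iff_mul_comm]
      exact hMeta x y hx hy
    · intro H
      letI commInst : CommGroup ↥(commutator G) :=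
        { (inferInstance : Group ↥(commutator G)) with
          mul_comm := fun x y => Subtype.ext (hMeta x y x.2 y.2) }
      have hcfgG : Group.FG ↥(commutator G) := (Group.fg_iff_subgroup_fg _).mpr hcfg
      have hinf : (H ⊓ commutator G).FG := by
        apply fg_of_le inf_le_right
        exact comm_group_noetherian hcfgG _
      haveI := hFG
      have hsurj : Function.Surjective (Abelianization.of (G := G)) :=
        fun y => Quotient.inductionOn' y fun x => ⟨x, rfl⟩
      have hQfg : Group.FG (Abelianization G) := Group.fg_of_surjective hsurj
      have hmap : (H.map (Abelianization.of : G →* Abelianization G)).FG :=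
        comm_group_noetherian hQfg _
      have hker : (Abelianization.of : G →* Abelianization G).ker = commutator G := by
        ext x
        rw [MonoidHom.mem_ker]
        exact QuotientGroup.eq_one_iff x
      refine fg_of_map_of_inf_ker Abelianization.of H hmap ?_
      rw [hker]
      exact hinf
end

section
/- Let B be an abelian group, let I be the augmentation ideal of ℤ[B], let S = {1 + x : x ∈ I}, and let A be a ℤ[B]-module. Fix s, t ∈ S. Then the map A → A_S sending a to (a·s)/t induces, for every n ≥ 1, an isomorphism A/AIⁿ ≅ A_S/(A_S)Iⁿ. -/
/-- The augmentation map `ℤ[B] → ℤ`, sending every group element to `1`. -/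
noncomputable def augmentation (B : Type*) [CommGroup B] : MonoidAlgebra ℤ B →ₐ[ℤ] ℤ :=
  (MonoidAlgebra.lift ℤ ℤ B) 1

/-- The augmentation ideal `I` of `ℤ[B]`: the kernel of the augmentation map. -/
noncomputable def augmentationIdeal (B : Type*) [CommGroup B] : Ideal (MonoidAlgebra ℤ B) :=
  RingHom.ker (augmentation B).toRingHom

/-- The multiplicative set `S = {1 + x : x ∈ I} ⊆ ℤ[B]`, where `I` is the augmentation
ideal. -/
noncomputable def augS (B : Type*) [CommGroup B] : Submonoid (MonoidAlgebra ℤ B) where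
  carrier := {r | ∃ x ∈ augmentationIdeal B, r = 1 + x}
  one_mem' := ⟨0, (augmentationIdeal B).zero_mem, by ring⟩
  mul_mem' := by
    rintro a b ⟨x, hx, rfl⟩ ⟨y, hy, rfl⟩
    exact ⟨x + y + x * y,
      Ideal.add_mem _ (Ideal.add_mem _ hx hy) (Ideal.mul_mem_right y _ hx), by ring⟩

/-- The map `A → A_S` sending `a` to `(a·s)/t`. -/
noncomputable def mulDivMap {B : Type*} [CommGroup B] {A : Type*} [AddCommGroup A]
    [Module (MonoidAlgebra ℤ B) A] (s t : augS B) :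
    A →ₗ[MonoidAlgebra ℤ B] LocalizedModule (augS B) A where
  toFun a := LocalizedModule.mk ((s : MonoidAlgebra ℤ B) • a) t
  map_add' a b := by
    rw [LocalizedModule.mk_add_mk, ← smul_add, ← smul_add,
      LocalizedModule.mk_cancel_common_left]
  map_smul' r a := by
    show LocalizedModule.mk ((s : MonoidAlgebra ℤ B) • r • a) t =
      r • LocalizedModule.mk ((s : MonoidAlgebra ℤ B) • a) t
    rw [LocalizedModule.smul'_mk, smul_smul, smul_smul, mul_comm]

/-- Any `R`-linear map `f : A → C` carries `Iⁿ•A` into `Iⁿ•C`. -/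
theorem smul_top_le_comap {R A C : Type*} [CommRing R] [AddCommGroup A] [AddCommGroup C]
    [Module R A] [Module R C] (I : Ideal R) (f : A →ₗ[R] C) :
    I • (⊤ : Submodule R A) ≤ Submodule.comap f (I • (⊤ : Submodule R C)) :=
  Submodule.smul_le.mpr fun r hr a _ => by
    rw [Submodule.mem_comap, map_smul]
    exact Submodule.smul_mem_smul hr Submodule.mem_top


section Aux

/-- Elements of `J` act as zero on `M ⧸ J•⊤`. -/
theorem smul_quot_eq_zero' {R M : Type*} [CommRing R] [AddCommGroup M] [Module R M]
    {J : Ideal R} {w : R} (hw : w ∈ J) (q : M ⧸ (J • ⊤ : Submodule R M)) : w • q = 0 := by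
  obtain ⟨m, rfl⟩ := Submodule.Quotient.mk_surjective _ q
  rw [← Submodule.Quotient.mk_smul, Submodule.Quotient.mk_eq_zero]
  exact Submodule.smul_mem_smul hw Submodule.mem_top

/-- If `r ≡ 1 mod J` then `r` acts as the identity on `M ⧸ J•⊤`. -/
theorem smul_quot_eq_self' {R M : Type*} [CommRing R] [AddCommGroup M] [Module R M]
    {J : Ideal R} {r : R} (hw : r - 1 ∈ J) (q : M ⧸ (J • ⊤ : Submodule R M)) : r • q = q := by
  have h := smul_quot_eq_zero' hw q
  rwa [sub_smul, one_smul, sub_eq_zero] at h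

/-- Every element of `S = 1 + I` has a quasi-inverse modulo `Iⁿ`. -/
theorem aug_quasi_inv {B : Type*} [CommGroup B] (n : ℕ) (u : augS B) :
    ∃ v : MonoidAlgebra ℤ B, (u : MonoidAlgebra ℤ B) * v - 1 ∈ augmentationIdeal B ^ n := by
  obtain ⟨x, hx, hux⟩ := u.2
  refine ⟨∑ i ∈ Finset.range n, (-x) ^ i, ?_⟩
  have hg := geom_sum_mul (-x) n
  have : (u : MonoidAlgebra ℤ B) * (∑ i ∈ Finset.range n, (-x) ^ i) - 1 = -((-x) ^ n) := by
    rw [hux]; linear_combination -hg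
  rw [this]
  exact neg_mem (Ideal.pow_mem_pow (neg_mem hx) n)

theorem mk_one_mem_smul_top {B : Type*} [CommGroup B] {A : Type*} [AddCommGroup A]
    [Module (MonoidAlgebra ℤ B) A] {J : Ideal (MonoidAlgebra ℤ B)} {a : A}
    (ha : LocalizedModule.mk a 1 ∈
      J • (⊤ : Submodule (MonoidAlgebra ℤ B) (LocalizedModule (augS B) A))) :
    ∃ u : augS B, (u : MonoidAlgebra ℤ B) • a ∈ J • (⊤ : Submodule (MonoidAlgebra ℤ B) A) := by
  set R := MonoidAlgebra ℤ B
  set N : Submodule R A := J • ⊤ with hN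
  set P : Submodule R (LocalizedModule (augS B) A) :=
    { carrier := {z | ∃ u : augS B, ∃ m ∈ N, (u : R) • z = LocalizedModule.mk m 1}
      add_mem' := by
        rintro z₁ z₂ ⟨u₁, m₁, hm₁, h₁⟩ ⟨u₂, m₂, hm₂, h₂⟩
        refine ⟨u₁ * u₂, (u₂ : R) • m₁ + (u₁ : R) • m₂,
          N.add_mem (N.smul_mem _ hm₁) (N.smul_mem _ hm₂), ?_⟩
        push_cast
        rw [smul_add, mul_comm (u₁ : R) (u₂ : R), mul_smul, h₁,
          mul_smul, smul_comm (u₂ : R) (u₁ : R) z₂, h₂,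
          LocalizedModule.smul'_mk, LocalizedModule.smul'_mk, LocalizedModule.mk_add_mk,
          one_mul, one_smul, one_smul]
      zero_mem' := ⟨1, 0, N.zero_mem, by
        rw [smul_zero, ← LocalizedModule.zero_mk 1]⟩
      smul_mem' := by
        rintro r z ⟨u, m, hm, h⟩
        exact ⟨u, r • m, N.smul_mem r hm, by
          rw [smul_comm, h, LocalizedModule.smul'_mk]⟩ } with hP
  have hle : J • (⊤ : Submodule R (LocalizedModule (augS B) A)) ≤ P := by
    refine Submodule.smul_le.mpr fun r hr z _ => ?_
    induction z using LocalizedModule.induction_on with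
    | h a' u' =>
      refine ⟨u', r • a', Submodule.smul_mem_smul hr Submodule.mem_top, ?_⟩
      rw [LocalizedModule.smul'_mk, LocalizedModule.smul'_mk,
        ← Submonoid.smul_def, LocalizedModule.mk_cancel]
  obtain ⟨u, m, hm, h⟩ := hle ha
  rw [LocalizedModule.smul'_mk] at h
  rw [LocalizedModule.mk_eq] at h
  obtain ⟨c, hc⟩ := h
  simp only [one_smul] at hc
  refine ⟨c * u, ?_⟩
  have : ((c * u : augS B) : R) • a = (c : R) • m := by
    push_cast
    rw [Submonoid.smul_def, Submonoid.smul_def] at hc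
    rw [mul_smul]
    exact hc
  rw [this]
  exact N.smul_mem _ hm

end Aux

/-- Let `B` be an abelian group, `I` the augmentation ideal of `ℤ[B]`, `S = 1 + I`, and `A` a
`ℤ[B]`-module. For fixed `s, t ∈ S`, the map `A → A_S`, `a ↦ (a·s)/t`, induces for every
`n ≥ 1` an isomorphism `A/AIⁿ ≅ A_S/(A_S)Iⁿ`. -/
theorem stmt_5 {B : Type*} [CommGroup B] {A : Type*} [AddCommGroup A]
    [Module (MonoidAlgebra ℤ B) A] (s t : augS B) (n : ℕ) (hn : 1 ≤ n) :
    Function.Bijective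
      (Submodule.mapQ
        ((augmentationIdeal B ^ n) • (⊤ : Submodule (MonoidAlgebra ℤ B) A))
        ((augmentationIdeal B ^ n) •
          (⊤ : Submodule (MonoidAlgebra ℤ B) (LocalizedModule (augS B) A)))
        (mulDivMap s t)
        (smul_top_le_comap (augmentationIdeal B ^ n) (mulDivMap s t))) := by
  classical
  set R := MonoidAlgebra ℤ B
  set J : Ideal R := augmentationIdeal B ^ n with hJ
  set N : Submodule R A := J • ⊤ with hNdef
  set N' : Submodule R (LocalizedModule (augS B) A) := J • ⊤ with hN'def
  set f := mulDivMap (A := A) s t with hf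
  set F := Submodule.mapQ N N' f (smul_top_le_comap J f) with hF
  -- action of elements of S on the quotients is bijective (quasi-inverses)
  constructor
  · -- injectivity
    intro q₁ q₂ hq
    obtain ⟨a₁, rfl⟩ := Submodule.Quotient.mk_surjective _ q₁
    obtain ⟨a₂, rfl⟩ := Submodule.Quotient.mk_surjective _ q₂
    rw [Submodule.mapQ_apply, Submodule.mapQ_apply, Submodule.Quotient.eq] at hq
    rw [Submodule.Quotient.eq]
    have hmem : LocalizedModule.mk ((s : R) • (a₁ - a₂)) t ∈ N' := by
      have : f a₁ - f a₂ = LocalizedModule.mk ((s : R) • (a₁ - a₂)) t := by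
        rw [← map_sub]; rfl
      rwa [this] at hq
    have hmem1 : LocalizedModule.mk ((s : R) • (a₁ - a₂)) 1 ∈ N' := by
      have := N'.smul_mem (t : R) hmem
      rwa [LocalizedModule.smul'_mk, ← Submonoid.smul_def, LocalizedModule.mk_cancel] at this
    obtain ⟨u, hu⟩ := mk_one_mem_smul_top hmem1
    rw [← mul_smul] at hu
    -- now (u*s) • (a₁ - a₂) ∈ N; use quasi-inverse of u*s
    obtain ⟨v, hv⟩ := aug_quasi_inv n (u * ⟨s, s.2⟩)
    have h0 : Submodule.Quotient.mk (p := N) (((u : R) * (s : R)) • (a₁ - a₂)) = 0 :=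
      (Submodule.Quotient.mk_eq_zero N).mpr hu
    rw [Submodule.Quotient.mk_smul] at h0
    have h1 : (v * ((u : R) * (s : R))) • (Submodule.Quotient.mk (p := N) (a₁ - a₂)) = 0 := by
      rw [mul_smul, h0, smul_zero]
    have h2 : (v * ((u : R) * (s : R))) •
        (Submodule.Quotient.mk (p := N) (a₁ - a₂)) =
        Submodule.Quotient.mk (p := N) (a₁ - a₂) := by
      refine smul_quot_eq_self' ?_ _
      have : v * ((u : R) * (s : R)) - 1 = ((u * ⟨s, s.2⟩ : augS B) : R) * v - 1 := by
        push_cast; ring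
      rw [this]; exact hv
    exact (Submodule.Quotient.mk_eq_zero N).mp (h2.symm.trans h1)
  · -- surjectivity
    intro q'
    obtain ⟨z, rfl⟩ := Submodule.Quotient.mk_surjective _ q'
    induction z using LocalizedModule.induction_on with
    | h a u =>
      obtain ⟨vs, hvs⟩ := aug_quasi_inv n s
      obtain ⟨vu, hvu⟩ := aug_quasi_inv n u
      refine ⟨Submodule.Quotient.mk ((vs * vu * (t : R)) • a), ?_⟩
      rw [Submodule.mapQ_apply]
      have hfa : f ((vs * vu * (t : R)) • a) =
          ((s : R) * vs * vu) • LocalizedModule.mk a 1 := by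
        show LocalizedModule.mk ((s : R) • (vs * vu * (t : R)) • a) t = _
        rw [← mul_smul]
        have he : (s : R) * (vs * vu * (t : R)) = ((s : R) * vs * vu) * (t : R) := by ring
        rw [he, mul_smul, ← LocalizedModule.smul'_mk, ← Submonoid.smul_def,
          LocalizedModule.mk_cancel]
      rw [hfa]
      have h4 : Submodule.Quotient.mk (p := N') (LocalizedModule.mk a (1 : augS B)) =
          (u : R) • Submodule.Quotient.mk (p := N') (LocalizedModule.mk a u) := by
        rw [← Submodule.Quotient.mk_smul, LocalizedModule.smul'_mk, ← Submonoid.smul_def,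
          LocalizedModule.mk_cancel]
      rw [Submodule.Quotient.mk_smul, h4, ← mul_smul]
      refine smul_quot_eq_self' ?_ _
      have he2 : (s : R) * vs * vu * (u : R) - 1 =
          ((s : R) * vs - 1) * ((u : R) * vu) + ((u : R) * vu - 1) := by ring
      rw [he2]
      exact add_mem (Ideal.mul_mem_right _ _ hvs) hvu
end
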